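/- For each i with 1 ≤ i ≤ n, the creation operator B_i^+ = Σ_{J ⊂ {1,…,n}, |J| = i} x_J D_J maps symmetric polynomials in x_1,…,x_n to symmetric polynomials in x_1,…,x_n. -/

import Mathlib

open MvPolynomial

noncomputable section Jack

/-- The field `ℚ(α)` of rational functions in the Jack parameter `α`. -/
abbrev FF : Type := RatFunc ℚ

/-- The Jack parameter `α`, a transcendental element of `ℚ(α)`. -/
abbrev alpha : FF := RatFunc.X

/-- Polynomials in `x_1, …, x_n` over `ℚ(α)`. -/
abbrev R (n : ℕ) : Type := MvPolynomial (Fin n) FF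

variable {n : ℕ}

/-- The exchange operator `K_{ij}` permuting the variables `x_i` and `x_j`. -/
def Kex (i j : Fin n) (p : R n) : R n := rename (Equiv.swap i j) p

lemma kex_dvd (i j : Fin n) (p : R n) : (X i - X j : R n) ∣ (p - Kex i j p) := by
  unfold Kex
  induction p using MvPolynomial.induction_on with
  | C a => simp
  | add p q hp hq =>
      have h := dvd_add hp hq
      rw [map_add]
      convert h using 1
      ring
  | mul_X p k hp =>
      rw [map_mul, rename_X]
      have key : p * X k - rename (Equiv.swap i j) p * X (Equiv.swap i j k)
          = (p - rename (Equiv.swap i j) p) * X k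
            + rename (Equiv.swap i j) p * (X k - X (Equiv.swap i j k)) := by ring
      rw [key]
      refine dvd_add (hp.mul_right _) ?_
      rcases eq_or_ne k i with rfl | hki
      · rw [Equiv.swap_apply_left]
        exact Dvd.intro_left _ rfl
      rcases eq_or_ne k j with rfl | hkj
      · rw [Equiv.swap_apply_right]
        refine dvd_mul_of_dvd_right ?_ _
        exact dvd_sub_comm.mp dvd_rfl
      · rw [Equiv.swap_apply_of_ne_of_ne hki hkj]
        simp

/-- The divided difference `(p - K_{ij} p)/(x_i - x_j)`, a polynomial. -/
def dd (i j : Fin n) (p : R n) : R n := (kex_dvd i j p).choose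

lemma dd_spec (i j : Fin n) (p : R n) :
    p - Kex i j p = (X i - X j) * dd i j p := (kex_dvd i j p).choose_spec

/-- The Dunkl--Cherednik operator
`D_i = α x_i ∂/∂x_i + Σ_{j ≠ i} (x_i/(x_i - x_j))(1 - K_{ij})`. -/
def D (i : Fin n) (p : R n) : R n :=
  C alpha * (X i * pderiv i p) + ∑ j ∈ Finset.univ.erase i, X i * dd i j p

/-- The shifted operator `D_i + m`. -/
def Dm (i : Fin n) (m : ℤ) (p : R n) : R n := D i p + m • p

/-- `(D_{j_1}+m)(D_{j_2}+m+1)⋯` along a list of indices, applied to `p`. -/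
def DJl : List (Fin n) → ℤ → R n → R n
  | [], _, p => p
  | j :: t, m, p => Dm j m (DJl t (m + 1) p)

/-- `D_J = (D_{j_1}+1)(D_{j_2}+2)⋯(D_{j_ℓ}+ℓ)` for `J = {j_1 < … < j_ℓ}`. -/
def DJ (J : Finset (Fin n)) (p : R n) : R n := DJl (J.sort (· ≤ ·)) 1 p

/-- The creation operator `B_i^+ = Σ_{|J| = i} x_J D_J`. -/
def Bop (i : ℕ) (p : R n) : R n :=
  ∑ J ∈ Finset.univ.powersetCard i, (∏ k ∈ J, X k) * DJ J p

/-- The canonical image of `ℤ[α]` in `ℚ(α)`. -/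
def toFF (q : Polynomial ℤ) : FF :=
  algebraMap (Polynomial ℚ) FF (q.map (Int.castRingHom ℚ))

/-- A scalar in `ℚ(α)` is a polynomial in `α` with integer coefficients. -/
def IntAlpha (c : FF) : Prop := ∃ q : Polynomial ℤ, c = toFF q

/-- `p` is symmetric in the variables indexed by `J`. -/
def SymmIn (J : Finset (Fin n)) (p : R n) : Prop :=
  ∀ i ∈ J, ∀ j ∈ J, Kex i j p = p

/-- The monomial symmetric polynomial `m_μ`, the sum of `x^ν` over the distinct
permutations `ν` of the exponent vector `μ`. -/
def msymmF (μ : Fin n → ℕ) : R n :=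
  ∑ ν ∈ Finset.image
      (fun σ : Equiv.Perm (Fin n) => Finsupp.equivFunOnFinite.symm (μ ∘ σ))
      Finset.univ,
    monomial ν 1

/-- The power-sum product `p_λ = p_{λ_1} p_{λ_2} ⋯` over the nonzero parts of `λ`. -/
def pprod (lam : Fin n → ℕ) : R n :=
  ∏ i ∈ Finset.univ.filter (fun i => lam i ≠ 0), psum (Fin n) FF (lam i)

/-- The number of (nonzero) parts `ℓ(λ)`. -/
def plen (lam : Fin n → ℕ) : ℕ := (Finset.univ.filter fun i => lam i ≠ 0).card

/-- `z_λ = ∏_i i^{m_i(λ)} m_i(λ)!`. -/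
def zed (lam : Fin n → ℕ) : ℕ :=
  ∏ i ∈ Finset.Icc 1 (∑ j, lam j),
    i ^ ((Finset.univ.filter fun j => lam j = i).card)
      * Nat.factorial ((Finset.univ.filter fun j => lam j = i).card)

/-- Dominance order: `μ ≤ λ` (same total degree). -/
def Dominates (μ lam : Fin n → ℕ) : Prop :=
  (∑ i, μ i = ∑ i, lam i) ∧
    ∀ k : Fin n, ∑ i ∈ Finset.univ.filter (· ≤ k), μ i ≤
      ∑ i ∈ Finset.univ.filter (· ≤ k), lam i

/-- Iterated Rodrigues construction: `rodA lam i = (B_i^+)^{λ_i-λ_{i+1}} ⋯ (B_1^+)^{λ_1-λ_2}·1`,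
where `lam k` denotes `λ_k` (1-indexed). -/
def rodA (lam : ℕ → ℕ) : ℕ → R n
  | 0 => 1
  | i + 1 => (Bop (i + 1))^[lam (i + 1) - lam (i + 2)] (rodA lam i)

/-- `(B_n^+)^{λ_n}(B_{n-1}^+)^{λ_{n-1}-λ_n} ⋯ (B_1^+)^{λ_1-λ_2}·1`. -/
def rod (lam : ℕ → ℕ) : R n := rodA lam n

/-- The field of rational functions in `x_1,…,x_n` over `ℚ(α)`. -/
abbrev KF (n : ℕ) : Type := FractionRing (R n)

/-- The embedding of polynomials into rational functions. -/
def toK : R n →+* KF n := algebraMap (R n) (KF n)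

/-- The Sutherland operator
`H(α) = α Σ_j (x_j ∂_j)^2 + Σ_{j<k} ((x_j+x_k)/(x_j-x_k))(x_j ∂_j − x_k ∂_k)`,
applied to a polynomial, with values in the field of rational functions. -/
def Hop (p : R n) : KF n :=
  toK (C alpha * ∑ j, X j * pderiv j (X j * pderiv j p))
    + ∑ jk ∈ (Finset.univ : Finset (Fin n × Fin n)).filter (fun jk => jk.1 < jk.2),
        (toK (X jk.1 + X jk.2) / toK (X jk.1 - X jk.2))
          * toK (X jk.1 * pderiv jk.1 p - X jk.2 * pderiv jk.2 p)

end Jack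

/-!
Write `D_a = x_a E_a` with `E_a = α ∂_a + Σ_{k ≠ a} (1 - K_{ak})/(x_a - x_k)`. For `q` symmetric
in `x_a, x_b` one finds `D_a D_b q + D_a q = x_a x_b E_a E_b q`, and `E_a E_b q = E_b E_a q`:
after splitting off the pair `{a, b}` this reduces to `∂_a ∂_b = ∂_b ∂_a` and to the commutation
of the divided differences `(1 - K_{ak})/(x_a - x_k)` and `(1 - K_{bl})/(x_b - x_l)` on `q`.
Consequently `(D_a + m)(D_b + m + 1) q = (D_b + m)(D_a + m + 1) q`, so on a symmetric `p` the
ordered product `D_J` may be taken in any order of `J`. Since `K_σ D_a K_σ⁻¹ = D_{σ a}`, a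
permutation `σ` then sends the term `x_J D_J p` of `B_i^+ p` to `x_{σ J} D_{σ J} p`.
-/

open MvPolynomial Finset

theorem MvPolynomial.pderiv_pderiv_comm {σ A : Type*} [CommSemiring A] (i j : σ)
    (p : MvPolynomial σ A) : pderiv i (pderiv j p) = pderiv j (pderiv i p) := by
  induction p using MvPolynomial.induction_on with
  | C a => simp
  | add p q hp hq => simp only [map_add, hp, hq]
  | mul_X p k hp =>
      have hX : ∀ a b : σ, pderiv a (pderiv b (X k : MvPolynomial σ A)) = 0 := by
        classical
        intro a b
        rcases eq_or_ne k b with rfl | h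
        · simp
        · simp [pderiv_X_of_ne h]
      simp only [pderiv_mul, map_add, hp, hX]
      ring

lemma Finset.map_univ_erase {α : Type*} [Fintype α] [DecidableEq α] (σ : Equiv.Perm α) (a : α) :
    (univ.erase a).map σ.toEmbedding = univ.erase (σ a) := by
  rw [map_erase, map_univ_equiv, Equiv.coe_toEmbedding]

lemma Finset.map_swap_of_notMem {α : Type*} [DecidableEq α] {S : Finset α} {a b : α}
    (ha : a ∉ S) (hb : b ∉ S) : S.map (Equiv.swap a b).toEmbedding = S := by
  ext x
  rw [mem_map_equiv, Equiv.symm_swap]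
  rcases eq_or_ne x a with rfl | hxa
  · simp only [Equiv.swap_apply_left, hb, ha]
  rcases eq_or_ne x b with rfl | hxb
  · simp only [Equiv.swap_apply_right, hb, ha]
  rw [Equiv.swap_apply_of_ne_of_ne hxa hxb]

noncomputable section

variable {n : ℕ}

lemma Kex_eq_rename (i j : Fin n) (p : R n) : Kex i j p = rename (Equiv.swap i j) p := rfl

lemma Kex_comm (i j : Fin n) (p : R n) : Kex i j p = Kex j i p := by
  rw [Kex, Equiv.swap_comm, ← Kex]

lemma Kex_Kex (i j : Fin n) (p : R n) : Kex i j (Kex i j p) = p := by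
  simp only [Kex, rename_rename, ← Equiv.Perm.coe_mul, Equiv.swap_mul_self, Equiv.Perm.coe_one,
    rename_id_apply]

lemma rename_Kex (σ : Equiv.Perm (Fin n)) (i j : Fin n) (p : R n) :
    rename σ (Kex i j p) = Kex (σ i) (σ j) (rename σ p) := by
  simp only [Kex, rename_rename, Equiv.swap_apply_apply, ← Equiv.Perm.coe_mul, inv_mul_cancel_right]

lemma X_sub_X_ne_zero {i j : Fin n} (h : i ≠ j) : (X i - X j : R n) ≠ 0 :=
  sub_ne_zero.mpr fun he => h (X_injective he)

lemma dd_eq_of_sub_Kex {i j : Fin n} (h : i ≠ j) {p q : R n}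
    (hq : p - Kex i j p = (X i - X j) * q) : dd i j p = q :=
  mul_left_cancel₀ (X_sub_X_ne_zero h) ((dd_spec i j p).symm.trans hq)

lemma dd_eq_zero_of_Kex_eq {i j : Fin n} (h : i ≠ j) {p : R n} (hp : Kex i j p = p) :
    dd i j p = 0 :=
  dd_eq_of_sub_Kex h (by rw [hp, sub_self, mul_zero])

lemma dd_swap {i j : Fin n} (h : i ≠ j) (p : R n) : dd j i p = -dd i j p := by
  apply dd_eq_of_sub_Kex h.symm
  rw [Kex_comm j i]
  linear_combination dd_spec i j p

lemma dd_add {i j : Fin n} (h : i ≠ j) (p q : R n) :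
    dd i j (p + q) = dd i j p + dd i j q := by
  apply dd_eq_of_sub_Kex h
  rw [Kex, map_add, ← Kex, ← Kex]
  linear_combination dd_spec i j p + dd_spec i j q

lemma dd_smul {i j : Fin n} (h : i ≠ j) (c : FF) (p : R n) :
    dd i j (c • p) = c • dd i j p := by
  apply dd_eq_of_sub_Kex h
  rw [Kex, map_smul, ← Kex, ← smul_sub, dd_spec, mul_smul_comm]

lemma dd_sum {i j : Fin n} (h : i ≠ j) {ι : Type*} (s : Finset ι) (f : ι → R n) :
    dd i j (∑ k ∈ s, f k) = ∑ k ∈ s, dd i j (f k) := by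
  classical
  induction s using Finset.induction_on with
  | empty => exact dd_eq_zero_of_Kex_eq h (map_zero _)
  | insert a s ha ih => rw [sum_insert ha, sum_insert ha, dd_add h, ih]

lemma dd_mul {i j : Fin n} (h : i ≠ j) (p q : R n) :
    dd i j (p * q) = p * dd i j q + Kex i j q * dd i j p := by
  apply dd_eq_of_sub_Kex h
  rw [Kex, map_mul, ← Kex, ← Kex]
  linear_combination p * dd_spec i j q + Kex i j q * dd_spec i j p

lemma dd_X_of_ne {i j k : Fin n} (h : i ≠ j) (hki : k ≠ i) (hkj : k ≠ j) :
    dd i j (X k) = 0 :=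
  dd_eq_zero_of_Kex_eq h (by rw [Kex, rename_X, Equiv.swap_apply_of_ne_of_ne hki hkj])

lemma dd_X_right {i j : Fin n} (h : i ≠ j) : dd i j (X j) = -1 := by
  apply dd_eq_of_sub_Kex h
  rw [Kex, rename_X, Equiv.swap_apply_right]
  ring

lemma rename_dd (σ : Equiv.Perm (Fin n)) {i j : Fin n} (h : i ≠ j) (p : R n) :
    rename σ (dd i j p) = dd (σ i) (σ j) (rename σ p) := by
  refine (dd_eq_of_sub_Kex (σ.injective.ne h) ?_).symm
  rw [← rename_Kex, ← rename_X, ← rename_X, ← map_sub, ← map_sub, ← map_mul, dd_spec]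

lemma dd_eq_dd_swap_of_Kex_eq {i j : Fin n} (h : i ≠ j) {p q : R n} (hpq : Kex i j p = q) :
    dd i j p = dd j i q := by
  have hsum : dd i j (p + q) = 0 :=
    dd_eq_zero_of_Kex_eq h (by rw [Kex, map_add, ← Kex, ← Kex, hpq, ← hpq, Kex_Kex, add_comm])
  rw [dd_swap h, ← sub_eq_zero, sub_neg_eq_add, ← dd_add h, hsum]

lemma pderiv_dd {i j k : Fin n} (h : i ≠ j) (hki : k ≠ i) (hkj : k ≠ j) (p : R n) :
    pderiv k (dd i j p) = dd i j (pderiv k p) := by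
  have hK : ∀ q : R n, pderiv k (Kex i j q) = Kex i j (pderiv k q) := fun q => by
    simpa [Kex, Equiv.swap_apply_of_ne_of_ne hki hkj] using
      pderiv_rename (Equiv.swap i j).injective k q
  refine (dd_eq_of_sub_Kex h ?_).symm
  have hspec := congrArg (pderiv k) (dd_spec i j p)
  rw [map_sub, pderiv_mul, map_sub, pderiv_X_of_ne hki.symm, pderiv_X_of_ne hkj.symm,
    hK] at hspec
  linear_combination hspec

lemma dd_dd_comm_of_disjoint {i j k l : Fin n} (hij : i ≠ j) (hkl : k ≠ l)
    (hik : i ≠ k) (hil : i ≠ l) (hjk : j ≠ k) (hjl : j ≠ l) (p : R n) :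
    dd i j (dd k l p) = dd k l (dd i j p) := by
  have hKK : Kex i j (Kex k l p) = Kex k l (Kex i j p) := by
    rw [Kex_eq_rename i j, rename_Kex, Equiv.swap_apply_of_ne_of_ne hik.symm hjk.symm,
      Equiv.swap_apply_of_ne_of_ne hil.symm hjl.symm, ← Kex_eq_rename]
  have hKdd : ∀ q, Kex i j (dd k l q) = dd k l (Kex i j q) := fun q => by
    rw [Kex_eq_rename, rename_dd _ hkl, Equiv.swap_apply_of_ne_of_ne hik.symm hjk.symm,
      Equiv.swap_apply_of_ne_of_ne hil.symm hjl.symm, ← Kex_eq_rename]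
  have hKdd' : ∀ q, Kex k l (dd i j q) = dd i j (Kex k l q) := fun q => by
    rw [Kex_eq_rename, rename_dd _ hij, Equiv.swap_apply_of_ne_of_ne hik hil,
      Equiv.swap_apply_of_ne_of_ne hjk hjl, ← Kex_eq_rename]
  have e₁ := dd_spec i j (dd k l p)
  have e₂ := dd_spec k l (dd i j p)
  have e₃ := dd_spec k l (Kex i j p)
  have e₄ := dd_spec i j (Kex k l p)
  rw [hKdd] at e₁
  rw [hKdd'] at e₂
  rw [hKK] at e₄
  -- times `(x_i - x_j)(x_k - x_l)`, both sides become `(1 - K_{ij})(1 - K_{kl}) p`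
  apply mul_left_cancel₀ (mul_ne_zero (X_sub_X_ne_zero hij) (X_sub_X_ne_zero hkl))
  linear_combination -(X k - X l : R n) * e₁ + (X i - X j) * e₂ - dd_spec k l p + dd_spec i j p
    + e₃ - e₄

lemma dd_dd_comm_of_Kex_eq {a b k : Fin n} (hab : a ≠ b) (hak : a ≠ k) (hbk : b ≠ k)
    {q : R n} (hq : Kex a b q = q) :
    dd a k (dd b k q) = dd b k (dd a k q) := by
  have hKak : Kex a k (dd b k q) = dd b a (Kex a k q) := by
    rw [Kex_eq_rename, rename_dd _ hbk, Equiv.swap_apply_of_ne_of_ne hab.symm hbk,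
      Equiv.swap_apply_right, ← Kex_eq_rename]
  have hKbk : Kex b k (dd a k q) = dd a b (Kex b k q) := by
    rw [Kex_eq_rename, rename_dd _ hak, Equiv.swap_apply_of_ne_of_ne hab hak,
      Equiv.swap_apply_right, ← Kex_eq_rename]
  have hKba : Kex b a (Kex a k q) = Kex b k q := by
    rw [Kex_comm b a, Kex_eq_rename a b, rename_Kex, Equiv.swap_apply_left,
      Equiv.swap_apply_of_ne_of_ne hak.symm hbk.symm, ← Kex_eq_rename, hq]
  have hKab : Kex a b (Kex b k q) = Kex a k q := by
    rw [Kex_eq_rename a b, rename_Kex, Equiv.swap_apply_right,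
      Equiv.swap_apply_of_ne_of_ne hak.symm hbk.symm, ← Kex_eq_rename, hq]
  have e₁ := dd_spec a k (dd b k q)
  have e₂ := dd_spec b k (dd a k q)
  have e₃ := dd_spec b a (Kex a k q)
  have e₄ := dd_spec a b (Kex b k q)
  rw [hKak] at e₁
  rw [hKbk] at e₂
  rw [hKba] at e₃
  rw [hKab] at e₄
  -- times `(x_a - x_b)(x_b - x_k)(x_a - x_k)`, both sides become combinations of
  -- `q, K_{ak} q, K_{bk} q`, because `K_{ab}` fixes `q` and exchanges `K_{ak} q` and `K_{bk} q`
  apply mul_left_cancel₀ (mul_ne_zero (mul_ne_zero (X_sub_X_ne_zero hab)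
    (X_sub_X_ne_zero hbk)) (X_sub_X_ne_zero hak))
  linear_combination -((X a - X b) * (X b - X k) : R n) * e₁ + (X a - X b) * (X a - X k) * e₂
    - (X a - X b) * dd_spec b k q + (X a - X b) * dd_spec a k q - (X b - X k) * e₃
    - (X a - X k) * e₄

/-- `α ∂_a + Σ_{k ∈ S} (1 - K_{ak})/(x_a - x_k)`; the operator `E_a` of the header is
`Dpart a (univ.erase a)`. -/
def Dpart (a : Fin n) (S : Finset (Fin n)) (p : R n) : R n :=
  C alpha * pderiv a p + ∑ k ∈ S, dd a k p

lemma D_eq_X_mul_Dpart (a : Fin n) (p : R n) : D a p = X a * Dpart a (univ.erase a) p := by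
  rw [D, Dpart, mul_add, mul_sum]
  ring

lemma Dpart_add {a : Fin n} {S : Finset (Fin n)} (ha : a ∉ S) (p q : R n) :
    Dpart a S (p + q) = Dpart a S p + Dpart a S q := by
  have hsum : ∑ k ∈ S, dd a k (p + q) = ∑ k ∈ S, dd a k p + ∑ k ∈ S, dd a k q := by
    rw [← sum_add_distrib]
    exact sum_congr rfl fun k hk => dd_add (ne_of_mem_of_not_mem hk ha).symm p q
  rw [Dpart, Dpart, Dpart, map_add, hsum]
  ring

lemma Dpart_smul {a : Fin n} {S : Finset (Fin n)} (ha : a ∉ S) (c : FF) (p : R n) :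
    Dpart a S (c • p) = c • Dpart a S p := by
  have hsum : ∑ k ∈ S, dd a k (c • p) = c • ∑ k ∈ S, dd a k p := by
    rw [smul_sum]
    exact sum_congr rfl fun k hk => dd_smul (ne_of_mem_of_not_mem hk ha).symm c p
  rw [Dpart, Dpart, Derivation.map_smul, hsum, smul_add, mul_smul_comm]

lemma Dpart_insert (a b : Fin n) {S : Finset (Fin n)} (hb : b ∉ S) (p : R n) :
    Dpart a (insert b S) p = Dpart a S p + dd a b p := by
  rw [Dpart, Dpart, sum_insert hb]
  ring

lemma Dpart_X_mul {a b : Fin n} {S : Finset (Fin n)} (ha : a ∉ S) (hb : b ∈ S) (g : R n) :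
    Dpart a S (X b * g) = X b * Dpart a S g - Kex a b g := by
  have hab : a ≠ b := (ne_of_mem_of_not_mem hb ha).symm
  have hsum : ∑ k ∈ S, dd a k (X b * g) = X b * ∑ k ∈ S, dd a k g - Kex a b g := by
    have hX : ∑ k ∈ S, Kex a k g * dd a k (X b) = -Kex a b g := by
      rw [sum_eq_single_of_mem b hb fun k hk hkb => by
          rw [dd_X_of_ne (ne_of_mem_of_not_mem hk ha).symm hab.symm hkb.symm, mul_zero],
        dd_X_right hab, mul_neg_one]
    rw [sum_congr rfl fun k hk => dd_mul (ne_of_mem_of_not_mem hk ha).symm (X b) g,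
      sum_add_distrib, ← mul_sum, hX, sub_eq_add_neg]
  rw [Dpart, Dpart, pderiv_mul, pderiv_X_of_ne hab.symm, zero_mul, zero_add, hsum]
  ring

lemma rename_Dpart (σ : Equiv.Perm (Fin n)) {a : Fin n} {S : Finset (Fin n)} (ha : a ∉ S)
    (p : R n) : rename σ (Dpart a S p) = Dpart (σ a) (S.map σ.toEmbedding) (rename σ p) := by
  rw [Dpart, Dpart, map_add, map_mul, rename_C, ← pderiv_rename σ.injective, map_sum, sum_map]
  congr 1
  exact sum_congr rfl fun k hk => rename_dd σ (ne_of_mem_of_not_mem hk ha).symm p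

lemma Dpart_Dpart {a b : Fin n} {S : Finset (Fin n)} (hab : a ≠ b) (ha : a ∉ S) (hb : b ∉ S)
    (q : R n) :
    Dpart a S (Dpart b S q) = C alpha ^ 2 * pderiv a (pderiv b q)
      + C alpha * (∑ l ∈ S, dd b l (pderiv a q) + ∑ k ∈ S, dd a k (pderiv b q))
      + ∑ k ∈ S, ∑ l ∈ S, dd a k (dd b l q) := by
  have hne : ∀ {c k}, c ∉ S → k ∈ S → c ≠ k := fun hc hk => (ne_of_mem_of_not_mem hk hc).symm
  have hpderiv : pderiv a (∑ l ∈ S, dd b l q) = ∑ l ∈ S, dd b l (pderiv a q) := by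
    rw [map_sum]
    exact sum_congr rfl fun l hl => pderiv_dd (hne hb hl) hab (hne ha hl) q
  have hdd : ∀ k ∈ S, dd a k (Dpart b S q)
      = C alpha * dd a k (pderiv b q) + ∑ l ∈ S, dd a k (dd b l q) := fun k hk => by
    rw [Dpart, dd_add (hne ha hk), ← smul_eq_C_mul, dd_smul (hne ha hk), smul_eq_C_mul,
      dd_sum (hne ha hk)]
  rw [Dpart, sum_congr rfl hdd, sum_add_distrib, ← mul_sum, Dpart, map_add, pderiv_C_mul,
    hpderiv]
  ring

lemma Dpart_comm {a b : Fin n} {S : Finset (Fin n)} (hab : a ≠ b) (ha : a ∉ S) (hb : b ∉ S)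
    {q : R n} (hq : Kex a b q = q) :
    Dpart a S (Dpart b S q) = Dpart b S (Dpart a S q) := by
  have hne : ∀ {c k}, c ∉ S → k ∈ S → c ≠ k := fun hc hk => (ne_of_mem_of_not_mem hk hc).symm
  have hdouble : ∑ k ∈ S, ∑ l ∈ S, dd a k (dd b l q) = ∑ k ∈ S, ∑ l ∈ S, dd b k (dd a l q) := by
    rw [sum_comm]
    refine sum_congr rfl fun l hl => sum_congr rfl fun k hk => ?_
    rcases eq_or_ne k l with rfl | hkl
    · exact dd_dd_comm_of_Kex_eq hab (hne ha hk) (hne hb hk) hq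
    · exact dd_dd_comm_of_disjoint (hne ha hk) (hne hb hl) hab (hne ha hl) (hne hb hk).symm hkl q
  rw [Dpart_Dpart hab ha hb, Dpart_Dpart hab.symm hb ha, pderiv_pderiv_comm, hdouble, add_comm
    (∑ l ∈ S, dd b l (pderiv a q))]

lemma rename_D (σ : Equiv.Perm (Fin n)) (a : Fin n) (p : R n) :
    rename σ (D a p) = D (σ a) (rename σ p) := by
  rw [D_eq_X_mul_Dpart, D_eq_X_mul_Dpart, map_mul, rename_X,
    rename_Dpart σ (notMem_erase a univ), map_univ_erase]

lemma D_add (a : Fin n) (p q : R n) : D a (p + q) = D a p + D a q := by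
  simp only [D_eq_X_mul_Dpart, Dpart_add (notMem_erase a univ), mul_add]

lemma D_smul (a : Fin n) (c : FF) (p : R n) : D a (c • p) = c • D a p := by
  simp only [D_eq_X_mul_Dpart, Dpart_smul (notMem_erase a univ), mul_smul_comm]

lemma D_D_add_D {a b : Fin n} (hab : a ≠ b) {q : R n} (hq : Kex a b q = q) :
    D a (D b q) + D a q = X a * X b * Dpart a (univ.erase a) (Dpart b (univ.erase b) q) := by
  have hK : Kex a b (Dpart b (univ.erase b) q) = Dpart a (univ.erase a) q := by
    rw [Kex_eq_rename, rename_Dpart _ (notMem_erase b univ), map_univ_erase, ← Kex_eq_rename, hq,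
      Equiv.swap_apply_right]
  rw [D_eq_X_mul_Dpart b, D_eq_X_mul_Dpart a, D_eq_X_mul_Dpart a q,
    Dpart_X_mul (notMem_erase a univ) (mem_erase.2 ⟨hab.symm, mem_univ b⟩), hK]
  ring

lemma Dpart_univ_erase_comm {a b : Fin n} (hab : a ≠ b) {q : R n} (hq : Kex a b q = q) :
    Dpart a (univ.erase a) (Dpart b (univ.erase b) q)
      = Dpart b (univ.erase b) (Dpart a (univ.erase a) q) := by
  set S := (univ.erase a).erase b with hS
  have ha : a ∉ S := fun h => notMem_erase a univ (mem_of_mem_erase h)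
  have hb : b ∉ S := notMem_erase b _
  have hUa : univ.erase a = insert b S := (insert_erase (mem_erase.2 ⟨hab.symm, mem_univ b⟩)).symm
  have hUb : univ.erase b = insert a S := by
    rw [hS, erase_right_comm]
    exact (insert_erase (mem_erase.2 ⟨hab, mem_univ a⟩)).symm
  have hK : Kex a b (Dpart b S q) = Dpart a S q := by
    rw [Kex_eq_rename, rename_Dpart _ hb, map_swap_of_notMem ha hb, ← Kex_eq_rename, hq,
      Equiv.swap_apply_right]
  have hba : dd b a q = 0 := dd_eq_zero_of_Kex_eq hab.symm (by rwa [Kex_comm])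
  have hab' : dd a b q = 0 := dd_eq_zero_of_Kex_eq hab hq
  rw [hUa, hUb, Dpart_insert b a ha q, Dpart_insert a b hb q, hba, hab', add_zero, add_zero,
    Dpart_insert a b hb, Dpart_insert b a ha, Dpart_comm hab ha hb hq,
    dd_eq_dd_swap_of_Kex_eq hab hK]

lemma D_comm_of_Kex_eq {a b : Fin n} (hab : a ≠ b) {q : R n} (hq : Kex a b q = q) :
    D a (D b q) + D a q = D b (D a q) + D b q := by
  rw [D_D_add_D hab hq, D_D_add_D hab.symm (by rwa [Kex_comm]), Dpart_univ_erase_comm hab hq]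
  ring

lemma Dm_Dm_comm {a b : Fin n} (hab : a ≠ b) {q : R n} (hq : Kex a b q = q) (m : ℤ) :
    Dm a m (Dm b (m + 1) q) = Dm b m (Dm a (m + 1) q) := by
  simp only [Dm, ← Int.cast_smul_eq_zsmul FF, D_add, D_smul]
  simp only [smul_eq_C_mul, Int.cast_add, Int.cast_one, map_add, map_one]
  linear_combination D_comm_of_Kex_eq hab hq

lemma rename_DJl (σ : Equiv.Perm (Fin n)) (l : List (Fin n)) (m : ℤ) (p : R n) :
    rename σ (DJl l m p) = DJl (l.map σ) m (rename σ p) := by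
  induction l generalizing m with
  | nil => rfl
  | cons x t ih =>
      simp only [DJl, List.map_cons, Dm, map_add, map_zsmul, rename_D, ih]

lemma Kex_DJl {a b : Fin n} {l : List (Fin n)} (ha : a ∉ l) (hb : b ∉ l) {p : R n}
    (hp : p.IsSymmetric) (m : ℤ) : Kex a b (DJl l m p) = DJl l m p := by
  rw [Kex_eq_rename, rename_DJl, hp, List.map_congr_left fun x hx =>
    Equiv.swap_apply_of_ne_of_ne (ne_of_mem_of_not_mem hx ha) (ne_of_mem_of_not_mem hx hb),
    List.map_id']

lemma DJl_perm {p : R n} (hp : p.IsSymmetric) {l₁ l₂ : List (Fin n)} (hperm : l₁.Perm l₂)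
    (hnd : l₁.Nodup) (m : ℤ) : DJl l₁ m p = DJl l₂ m p := by
  induction hperm generalizing m with
  | nil => rfl
  | cons x _ ih => simp only [DJl, ih (List.nodup_cons.1 hnd).2]
  | swap x y l =>
      simp only [List.nodup_cons, List.mem_cons, not_or] at hnd
      obtain ⟨⟨hyx, hyl⟩, hxl, -⟩ := hnd
      exact Dm_Dm_comm hyx (Kex_DJl hyl hxl hp _) m
  | trans h₁₂ _ ih₁₂ ih₂₃ => rw [ih₁₂ hnd, ih₂₃ (h₁₂.nodup_iff.1 hnd)]

lemma rename_DJ (σ : Equiv.Perm (Fin n)) (J : Finset (Fin n)) {p : R n} (hp : p.IsSymmetric) :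
    rename σ (DJ J p) = DJ (J.map σ.toEmbedding) p := by
  rw [DJ, DJ, rename_DJl, hp]
  refine DJl_perm hp ?_ ((sort_nodup J _).map σ.injective) 1
  rw [← Multiset.coe_eq_coe, ← Multiset.map_coe, sort_eq, sort_eq, map_val, Equiv.coe_toEmbedding]

end

theorem Bop_symmetric_general (n i : ℕ) (p : R n)
    (hp : p.IsSymmetric) : (Bop i p).IsSymmetric := by
  intro σ
  rw [Bop, map_sum]
  refine sum_equiv σ.finsetCongr (fun J => ?_) (fun J _ => ?_)
  · simp only [mem_powersetCard_univ, Equiv.finsetCongr_apply, card_map]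
  · rw [map_mul, map_prod, Equiv.finsetCongr_apply, prod_map, rename_DJ σ J hp]
    simp only [rename_X, Equiv.coe_toEmbedding]

/-- `B_i^+` maps symmetric polynomials to symmetric polynomials. -/
theorem Bop_symmetric (n i : ℕ) (h1 : 1 ≤ i) (h2 : i ≤ n) (p : R n)
    (hp : p.IsSymmetric) : (Bop i p).IsSymmetric :=
  Bop_symmetric_general n i p hp
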